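/- Let m be a finite (nonnegative) Borel measure on ℝ^d and let μ, ν be finite Borel measures on ℝ^d such that μ(A) ≤ m(A), ν(A) ≤ m(A) and |μ(A) − ν(A)| ≤ Δ·m(A) for every Borel set A, where Δ ≥ 0. Then for every k ≥ 1 and every Borel set A, the k-fold convolutions satisfy |μ^{*k}(A) − ν^{*k}(A)| ≤ k·Δ·m^{*k}(A). -/

import Mathlib

/-!
Rewrite the hypotheses as inequalities of measures: `μ ≤ ν + Δ • m`, `ν ≤ μ + Δ • m`, `μ ≤ m`,
`ν ≤ m`. Convolution is monotone and distributes over sums and scalar multiples, so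
`μ^{*(k+1)} = μ^{*k} * μ ≤ (ν^{*k} + kΔ • m^{*k}) * μ ≤ ν^{*k} * (ν + Δ • m) + kΔ • m^{*k} * m
≤ ν^{*(k+1)} + (k+1)Δ • m^{*(k+1)}`, and symmetrically with `μ` and `ν` exchanged.
-/

open MeasureTheory

noncomputable def convPow {d : ℕ} (μ : Measure (EuclideanSpace ℝ (Fin d))) : ℕ → Measure (EuclideanSpace ℝ (Fin d))
  | 0 => Measure.dirac 0
  | n + 1 => (convPow μ n).conv μ

open scoped ENNReal

namespace MeasureTheory.Measure

variable {M : Type*} [AddMonoid M] [MeasurableSpace M] [MeasurableAdd₂ M]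

theorem conv_mono {μ₁ μ₂ ν₁ ν₂ : Measure M} [SFinite ν₂] (hμ : μ₁ ≤ μ₂) (hν : ν₁ ≤ ν₂) :
    μ₁.conv ν₁ ≤ μ₂.conv ν₂ :=
  map_mono (prod_mono hμ hν) measurable_add

end MeasureTheory.Measure

theorem ENNReal.abs_toReal_sub_le_iff {a b c : ℝ≥0∞} (ha : a ≠ ∞) (hb : b ≠ ∞) (hc : c ≠ ∞)
    {t : ℝ} (ht : 0 ≤ t) :
    |a.toReal - b.toReal| ≤ t * c.toReal ↔
      a ≤ b + ENNReal.ofReal t * c ∧ b ≤ a + ENNReal.ofReal t * c := by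
  have htc : ENNReal.ofReal t * c ≠ ∞ := ENNReal.mul_ne_top ENNReal.ofReal_ne_top hc
  have key : ∀ {x y : ℝ≥0∞}, x ≠ ∞ → y ≠ ∞ →
      (x.toReal - y.toReal ≤ t * c.toReal ↔ x ≤ y + ENNReal.ofReal t * c) := by
    intro x y hx hy
    rw [sub_le_iff_le_add', ← ENNReal.toReal_le_toReal hx (ENNReal.add_ne_top.2 ⟨hy, htc⟩),
      ENNReal.toReal_add hy htc, ENNReal.toReal_mul, ENNReal.toReal_ofReal ht]
  rw [abs_sub_le_iff, key ha hb, key hb ha]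

section convPow

variable {d : ℕ}

local notation "E" => EuclideanSpace ℝ (Fin d)

instance (μ : Measure E) [SFinite μ] (k : ℕ) : SFinite (convPow μ k) := by
  induction k with
  | zero => rw [convPow]; infer_instance
  | succ k ih => rw [convPow]; infer_instance

instance (μ : Measure E) [IsFiniteMeasure μ] (k : ℕ) : IsFiniteMeasure (convPow μ k) := by
  induction k with
  | zero => rw [convPow]; infer_instance
  | succ k ih => rw [convPow]; infer_instance

theorem convPow_mono {μ ν : Measure E} [SFinite ν] (h : μ ≤ ν) (k : ℕ) :
    convPow μ k ≤ convPow ν k := by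
  induction k with
  | zero => exact le_rfl
  | succ k ih => exact Measure.conv_mono ih h

theorem convPow_le_convPow_add_smul {μ ν m : Measure E} [SFinite μ] [SFinite ν] [SFinite m]
    {c : ℝ≥0∞} (hμν : μ ≤ ν + c • m) (hμ : μ ≤ m) (hν : ν ≤ m) (k : ℕ) :
    convPow μ k ≤ convPow ν k + (k * c) • convPow m k := by
  induction k with
  | zero => simp [convPow]
  | succ k ih =>
    calc convPow μ (k + 1)
        ≤ (convPow ν k + (k * c) • convPow m k).conv μ := Measure.conv_mono ih le_rfl
      _ = (convPow ν k).conv μ + (k * c) • (convPow m k).conv μ := by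
        rw [Measure.add_conv, Measure.conv_smul_left]
      _ ≤ (convPow ν k).conv (ν + c • m) + (k * c) • (convPow m k).conv m := by
        gcongr
        · exact Measure.conv_mono le_rfl hμν
        · exact Measure.conv_mono le_rfl hμ
      _ = convPow ν (k + 1) + c • (convPow ν k).conv m + (k * c) • convPow m (k + 1) := by
        rw [Measure.conv_add, Measure.conv_smul_right]; rfl
      _ ≤ convPow ν (k + 1) + c • convPow m (k + 1) + (k * c) • convPow m (k + 1) := by
        gcongr
        exact Measure.conv_mono (convPow_mono hν k) le_rfl
      _ = convPow ν (k + 1) + ((k + 1 : ℕ) * c) • convPow m (k + 1) := by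
        rw [add_assoc, ← add_smul]; push_cast; ring_nf

end convPow

theorem stmt0 {d : ℕ} (μ ν m : Measure (EuclideanSpace ℝ (Fin d)))
    [IsFiniteMeasure μ] [IsFiniteMeasure ν] [IsFiniteMeasure m]
    (Δ : ℝ) (hΔ : 0 ≤ Δ)
    (hμm : ∀ A, MeasurableSet A → μ A ≤ m A)
    (hνm : ∀ A, MeasurableSet A → ν A ≤ m A)
    (hdiff : ∀ A, MeasurableSet A → |(μ A).toReal - (ν A).toReal| ≤ Δ * (m A).toReal) :
    ∀ k : ℕ, 1 ≤ k → ∀ A, MeasurableSet A →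
      |((convPow μ k) A).toReal - ((convPow ν k) A).toReal| ≤ k * Δ * ((convPow m k) A).toReal := by
  have hμ : μ ≤ m := Measure.le_iff.2 hμm
  have hν : ν ≤ m := Measure.le_iff.2 hνm
  have hclose (A : Set _) (hA : MeasurableSet A) :=
    (ENNReal.abs_toReal_sub_le_iff (measure_ne_top μ A) (measure_ne_top ν A)
      (measure_ne_top m A) hΔ).1 (hdiff A hA)
  have hμν : μ ≤ ν + ENNReal.ofReal Δ • m := Measure.le_iff.2 fun A hA => (hclose A hA).1
  have hνμ : ν ≤ μ + ENNReal.ofReal Δ • m := Measure.le_iff.2 fun A hA => (hclose A hA).2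
  intro k _ A _
  rw [ENNReal.abs_toReal_sub_le_iff (measure_ne_top _ A) (measure_ne_top _ A)
    (measure_ne_top _ A) (by positivity), ENNReal.ofReal_mul (Nat.cast_nonneg k),
    ENNReal.ofReal_natCast]
  exact ⟨convPow_le_convPow_add_smul hμν hμ hν k A, convPow_le_convPow_add_smul hνμ hν hμ k A⟩
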